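/- Let a, b, c ∈ A. Then: (i) φ_a(b) ≤ φ_a(1) = a°; (ii) if 0 ≤ b ≤ c then φ_a(b) ≤ φ_a(c); (iii) if 0 ≤ b, then φ_a(b)·c = 0 implies φ_a(c)·b = 0; (iv) if 0 ≤ b and 0 ≤ c, then φ_a(b)·c = 0 ⇔ φ_a(c)·b = 0; (v) if 0 ≤ b, then φ_a(b) = φ_a(b°). -/
import Mathlib


/-- A synaptic algebra: a real vector subspace `carrier` of a unital associative
real algebra `R`, containing `1`, equipped with a positive cone `Pos` making it a
partially ordered archimedean real vector space with order unit `1`, and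
satisfying conditions [SA2]–[SA9]. The partial order is `a ≤ b ↔ b - a ∈ Pos`. -/
structure SynapticAlgebra (R : Type*) [Ring R] [Algebra ℝ R] where
  carrier : Set R
  one_mem : (1 : R) ∈ carrier
  add_mem : ∀ {a b : R}, a ∈ carrier → b ∈ carrier → a + b ∈ carrier
  smul_mem : ∀ (t : ℝ) {a : R}, a ∈ carrier → t • a ∈ carrier
  neg_mem : ∀ {a : R}, a ∈ carrier → -a ∈ carrier
  Pos : Set R
  pos_subset : Pos ⊆ carrier
  pos_add : ∀ {a b : R}, a ∈ Pos → b ∈ Pos → a + b ∈ Pos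
  pos_smul : ∀ {t : ℝ}, 0 ≤ t → ∀ {a : R}, a ∈ Pos → t • a ∈ Pos
  pos_antisymm : ∀ {a : R}, a ∈ Pos → -a ∈ Pos → a = 0
  arch : ∀ {a b : R}, a ∈ carrier → b ∈ carrier →
    (∀ n : ℕ, b - (n : ℝ) • a ∈ Pos) → -a ∈ Pos
  one_pos : (1 : R) ∈ Pos
  orderUnit : ∀ {a : R}, a ∈ carrier → ∃ n : ℕ, (n : ℝ) • (1 : R) - a ∈ Pos
  SA2 : ∀ {a b : R}, a ∈ Pos → b ∈ Pos → a * b = b * a → a * b ∈ Pos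
  SA3 : ∀ {a : R}, a ∈ carrier → a * a ∈ Pos
  SA4 : ∀ {a b : R}, a ∈ Pos → b ∈ Pos → a * b * a ∈ Pos
  SA5 : ∀ {a b : R}, a ∈ carrier → b ∈ Pos → a * b * a = 0 → a * b = 0 ∧ b * a = 0
  SA6 : ∀ {a : R}, a ∈ Pos →
    ∃ b : R, b ∈ Pos ∧ (∀ c ∈ carrier, c * a = a * c → c * b = b * c) ∧ b * b = a
  SA7 : ∀ {a : R}, a ∈ carrier →
    ∃ p : R, p ∈ carrier ∧ p * p = p ∧ ∀ b ∈ carrier, (a * b = 0 ↔ p * b = 0)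
  SA8 : ∀ {a : R}, a ∈ carrier → a - 1 ∈ Pos → ∃ b ∈ carrier, a * b = 1 ∧ b * a = 1
  SA9 : ∀ {a b : R}, a ∈ carrier → b ∈ carrier → ∀ s : ℕ → R,
    (∀ n, s n ∈ carrier) → (∀ n, s (n + 1) - s n ∈ Pos) →
    (∀ m n, s m * s n = s n * s m) → (∀ n, s n * b = b * s n) →
    (∀ ε : ℝ, 0 < ε →
      ∃ N : ℕ, ∀ n ≥ N, (a - s n) - (-ε) • (1 : R) ∈ Pos ∧ ε • (1 : R) - (a - s n) ∈ Pos) →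
    a * b = b * a

namespace SynapticAlgebra

variable {R : Type*} [Ring R] [Algebra ℝ R]

/-- The partial order of the synaptic algebra: `a ≤ b` iff `b - a` is in the positive cone. -/
def le (S : SynapticAlgebra R) (a b : R) : Prop := b - a ∈ S.Pos

/-- The identification of a real number `t` with the element `t·1` of the algebra. -/
def scal (_ : SynapticAlgebra R) (t : ℝ) : R := t • (1 : R)

/-- The order-unit norm: `‖a‖ = inf {t : ℝ | 0 < t ∧ -t·1 ≤ a ≤ t·1}`. -/
noncomputable def nrm (S : SynapticAlgebra R) (a : R) : ℝ :=
  sInf {t : ℝ | 0 < t ∧ S.le (S.scal (-t)) a ∧ S.le a (S.scal t)}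

/-- `p` is a projection: an idempotent element of the algebra. -/
def IsProj (S : SynapticAlgebra R) (p : R) : Prop := p ∈ S.carrier ∧ p * p = p

/-- `e` is an effect: an element with `0 ≤ e ≤ 1`. -/
def IsEff (S : SynapticAlgebra R) (e : R) : Prop := e ∈ S.carrier ∧ S.le 0 e ∧ S.le e 1

/-- `b ∈ CC(a)`: `b` is in the algebra and commutes with every element of the
algebra that commutes with `a` (the double commutant of `a`). -/
def inCC (S : SynapticAlgebra R) (a b : R) : Prop :=
  b ∈ S.carrier ∧ ∀ c ∈ S.carrier, c * a = a * c → c * b = b * c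

/-- The square root of a positive element (chosen via [SA6]; it is unique). -/
noncomputable def sqrt (S : SynapticAlgebra R) (a : R) : R :=
  @dite R (a ∈ S.Pos) (Classical.dec _) (fun h => Classical.choose (S.SA6 h)) (fun _ => 0)

/-- The carrier projection `a°` of `a` (chosen via [SA7]; it is unique):
the projection `p` such that for all `b` in the algebra, `ab = 0 ↔ pb = 0`. -/
noncomputable def carr (S : SynapticAlgebra R) (a : R) : R :=
  @dite R (a ∈ S.carrier) (Classical.dec _) (fun h => Classical.choose (S.SA7 h)) (fun _ => 0)

/-- Absolute value: `|a| := (a²)^{1/2}`. -/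
noncomputable def abs (S : SynapticAlgebra R) (a : R) : R := S.sqrt (a * a)

/-- Positive part: `a⁺ := ½(|a| + a)`. -/
noncomputable def posPart (S : SynapticAlgebra R) (a : R) : R := (1/2 : ℝ) • (S.abs a + a)

/-- Negative part: `a⁻ := ½(|a| − a)`. -/
noncomputable def negPart (S : SynapticAlgebra R) (a : R) : R := (1/2 : ℝ) • (S.abs a - a)

/-- Signum: `sgn(a) := (a⁺)° − (a⁻)°`. -/
noncomputable def sgn (S : SynapticAlgebra R) (a : R) : R :=
  S.carr (S.posPart a) - S.carr (S.negPart a)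

/-- The Sasaki mapping: `φ_a(b) := (aba)°`. -/
noncomputable def sas (S : SynapticAlgebra R) (a b : R) : R := S.carr (a * b * a)

/-- `m` is the infimum of the projections `p` and `q` in the poset `P` of projections. -/
def IsMeet (S : SynapticAlgebra R) (p q m : R) : Prop :=
  S.IsProj m ∧ S.le m p ∧ S.le m q ∧ ∀ r, S.IsProj r → S.le r p → S.le r q → S.le r m

/-- `j` is the supremum of the projections `p` and `q` in the poset `P` of projections. -/
def IsJoin (S : SynapticAlgebra R) (p q j : R) : Prop :=
  S.IsProj j ∧ S.le p j ∧ S.le q j ∧ ∀ r, S.IsProj r → S.le p r → S.le q r → S.le j r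

end SynapticAlgebra
namespace SynapticAlgebra

variable {R : Type*} [Ring R] [Algebra ℝ R] (S : SynapticAlgebra R)
set_option linter.unusedSectionVars false

lemma sub_mem' {a b : R} (ha : a ∈ S.carrier) (hb : b ∈ S.carrier) :
    a - b ∈ S.carrier := by
  simpa [sub_eq_add_neg] using S.add_mem ha (S.neg_mem hb)

lemma sq_mem {a : R} (ha : a ∈ S.carrier) : a * a ∈ S.carrier :=
  S.pos_subset (S.SA3 ha)

/-- If `a² = 0` then `a = 0`. -/
lemma sq_zero {a : R} (ha : a ∈ S.carrier) (h : a * a = 0) : a = 0 := by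
  have := (S.SA5 ha S.one_pos (by simpa using h)).1
  simpa using this

/-- The Jordan product of two elements of the algebra is in the algebra. -/
lemma jordan_mem {a b : R} (ha : a ∈ S.carrier) (hb : b ∈ S.carrier) :
    a * b + b * a ∈ S.carrier := by
  have h1 : a * b + b * a = (a + b) * (a + b) - a * a - b * b := by noncomm_ring
  rw [h1]
  exact S.sub_mem' (S.sub_mem' (S.sq_mem (S.add_mem ha hb)) (S.sq_mem ha)) (S.sq_mem hb)

/-- The quadratic product `aba` of two elements of the algebra is in the algebra. -/
lemma quad_mem {a b : R} (ha : a ∈ S.carrier) (hb : b ∈ S.carrier) :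
    a * b * a ∈ S.carrier := by
  have hm : (a * (a * b + b * a) + (a * b + b * a) * a) - ((a * a) * b + b * (a * a)) ∈
      S.carrier :=
    S.sub_mem' (S.jordan_mem ha (S.jordan_mem ha hb)) (S.jordan_mem (S.sq_mem ha) hb)
  have h3 := S.smul_mem (1/2 : ℝ) hm
  have h4 : (1/2 : ℝ) • ((a * (a * b + b * a) + (a * b + b * a) * a) -
      ((a * a) * b + b * (a * a))) = a * b * a := by
    have h5 : (a * (a * b + b * a) + (a * b + b * a) * a) - ((a * a) * b + b * (a * a)) =
        (2 : ℝ) • (a * b * a) := by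
      rw [two_smul]; noncomm_ring
    rw [h5, smul_smul]; norm_num
  rwa [h4] at h3

/-- If `ab = 0` with `b` positive, then `ba = 0`. -/
lemma mul_zero_symm {a b : R} (ha : a ∈ S.carrier) (hb : b ∈ S.Pos) (h : a * b = 0) :
    b * a = 0 :=
  (S.SA5 ha hb (by rw [h, zero_mul])).2

/-- If `ba = 0` with `b` positive, then `ab = 0`. -/
lemma zero_mul_symm {a b : R} (ha : a ∈ S.carrier) (hb : b ∈ S.Pos) (h : b * a = 0) :
    a * b = 0 :=
  (S.SA5 ha hb (by rw [mul_assoc, h, mul_zero])).1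

/-- Idempotent elements of the algebra are positive. -/
lemma idem_pos {p : R} (hp : p ∈ S.carrier) (h : p * p = p) : p ∈ S.Pos :=
  h ▸ S.SA3 hp

lemma one_sub_idem {p : R} (h : p * p = p) : (1 - p) * (1 - p) = (1 - p) := by
  have e : (1 - p) * (1 - p) = 1 - p - p + p * p := by noncomm_ring
  rw [e, h]; abel

/-- The basic properties of the carrier projection. -/
lemma carr_spec {a : R} (ha : a ∈ S.carrier) :
    S.carr a ∈ S.carrier ∧ S.carr a * S.carr a = S.carr a ∧
      ∀ b ∈ S.carrier, (a * b = 0 ↔ S.carr a * b = 0) := by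
  have h : S.carr a = Classical.choose (S.SA7 ha) := dif_pos ha
  rw [h]
  exact Classical.choose_spec (S.SA7 ha)

lemma mul_carr {a : R} (ha : a ∈ S.carrier) : a * S.carr a = a := by
  obtain ⟨hm, hi, hiff⟩ := S.carr_spec ha
  have h1 : S.carr a * (1 - S.carr a) = 0 := by rw [mul_sub, mul_one, hi, sub_self]
  have h2 : a * (1 - S.carr a) = 0 :=
    (hiff _ (S.sub_mem' S.one_mem hm)).mpr h1
  rw [mul_sub, mul_one, sub_eq_zero] at h2
  exact h2.symm

/-- For projections, `pq = p` implies `qp = p`. -/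
lemma proj_mul_symm {p q : R} (hpm : p ∈ S.carrier) (hp2 : p * p = p)
    (hqm : q ∈ S.carrier) (hpq : p * q = p) : q * p = p := by
  have hxm : q * p - p ∈ S.carrier := by
    have h1 : q * p - p = (q * p + p * q) - (p + p) := by rw [hpq]; abel
    rw [h1]
    exact S.sub_mem' (S.jordan_mem hqm hpm) (S.add_mem hpm hpm)
  have hx2 : (q * p - p) * (q * p - p) = 0 := by
    have e : (q * p - p) * (q * p - p) =
        q * (p * q) * p - q * (p * p) - (p * q) * p + p * p := by noncomm_ring
    rw [e, hpq, hp2, mul_assoc, hp2]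
    abel
  have := S.sq_zero hxm hx2
  rwa [sub_eq_zero] at this

/-- If `pq = qp = p` for projections `p, q`, then `p ≤ q`. -/
lemma proj_le {p q : R} (hpm : p ∈ S.carrier) (hp2 : p * p = p)
    (hqm : q ∈ S.carrier) (hq2 : q * q = q) (hpq : p * q = p) (hqp : q * p = p) :
    S.le p q := by
  have key : (1 - p) * q * (1 - p) = q - p := by
    have e : (1 - p) * q * (1 - p) = q - q * p - p * q + p * q * p := by noncomm_ring
    rw [e, hpq, hqp, hp2]; abel
  show q - p ∈ S.Pos
  rw [← key]
  exact S.SA4 (S.idem_pos (S.sub_mem' S.one_mem hpm) (one_sub_idem hp2))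
    (S.idem_pos hqm hq2)

/-- If `a²x = 0` with `x` positive, then `ax = 0` and `xa = 0`. -/
lemma sq_ann {a x : R} (ha : a ∈ S.carrier) (hx : x ∈ S.Pos) (h : a * a * x = 0) :
    a * x = 0 ∧ x * a = 0 := by
  have hm : a * x * a ∈ S.carrier := S.quad_mem ha (S.pos_subset hx)
  have hsq : (a * x * a) * (a * x * a) = 0 := by
    have e : (a * x * a) * (a * x * a) = a * x * (a * a * x) * a := by noncomm_ring
    rw [e, h, mul_zero, zero_mul]
  exact S.SA5 ha hx (S.sq_zero hm hsq)

/-- `(a²)° = a°`. -/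
lemma carr_sq {a : R} (ha : a ∈ S.carrier) : S.carr (a * a) = S.carr a := by
  obtain ⟨hqm, hq2, hqiff⟩ := S.carr_spec (S.sq_mem ha)
  obtain ⟨hpm, hp2, hpiff⟩ := S.carr_spec ha
  have h1qm : 1 - S.carr (a * a) ∈ S.carrier := S.sub_mem' S.one_mem hqm
  have h1pm : 1 - S.carr a ∈ S.carrier := S.sub_mem' S.one_mem hpm
  have ha1q : a * a * (1 - S.carr (a * a)) = 0 :=
    (hqiff _ h1qm).mpr (by rw [mul_sub, mul_one, hq2, sub_self])
  have ha1q' : a * (1 - S.carr (a * a)) = 0 :=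
    (S.sq_ann ha (S.idem_pos h1qm (one_sub_idem hq2)) ha1q).1
  have hp1q : S.carr a * (1 - S.carr (a * a)) = 0 := (hpiff _ h1qm).mp ha1q'
  have ha1p : a * (1 - S.carr a) = 0 :=
    (hpiff _ h1pm).mpr (by rw [mul_sub, mul_one, hp2, sub_self])
  have ha1p' : a * a * (1 - S.carr a) = 0 := by rw [mul_assoc, ha1p, mul_zero]
  have hq1p : S.carr (a * a) * (1 - S.carr a) = 0 := (hqiff _ h1pm).mp ha1p'
  have hpq : S.carr a * S.carr (a * a) = S.carr a := by
    rw [mul_sub, mul_one, sub_eq_zero] at hp1q; exact hp1q.symm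
  have hqp : S.carr (a * a) * S.carr a = S.carr (a * a) := by
    rw [mul_sub, mul_one, sub_eq_zero] at hq1p; exact hq1p.symm
  have h := S.proj_mul_symm hpm hp2 hqm hpq
  exact hqp.symm.trans h

/-- Key orthogonality transfer for the Sasaki mapping (part (iii)). -/
lemma sas_orth {a b c : R} (ha : a ∈ S.carrier) (hb : b ∈ S.carrier)
    (hc : c ∈ S.carrier) (hbp : b ∈ S.Pos) (h : S.sas a b * c = 0) :
    S.sas a c * b = 0 := by
  have haba : a * b * a ∈ S.carrier := S.quad_mem ha hb
  have haca : a * c * a ∈ S.carrier := S.quad_mem ha hc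
  obtain ⟨_, _, hbiff⟩ := S.carr_spec haba
  obtain ⟨_, _, hciff⟩ := S.carr_spec haca
  have h1 : (a * b * a) * c = 0 := (hbiff c hc).mpr h
  have h2 : (a * c * a) * b * (a * c * a) = 0 := by
    have e : (a * c * a) * b * (a * c * a) = a * c * ((a * b * a) * c) * a := by noncomm_ring
    rw [e, h1, mul_zero, zero_mul]
  have h3 : (a * c * a) * b = 0 := (S.SA5 haca hbp h2).1
  exact (hciff b hb).mp h3

end SynapticAlgebra

open SynapticAlgebra Filter

variable {R : Type*} [Ring R] [Algebra ℝ R]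

/-- Theorem 4.9: properties of the Sasaki mapping `φ_a(b) = (aba)°`:
(i) `φ_a(b) ≤ φ_a(1) = a°`; (ii) `0 ≤ b ≤ c ⟹ φ_a(b) ≤ φ_a(c)`;
(iii) if `0 ≤ b` then `φ_a(b)c = 0 ⟹ φ_a(c)b = 0`; (iv) if `0 ≤ b, c` then
`φ_a(b)c = 0 ↔ φ_a(c)b = 0`; (v) if `0 ≤ b` then `φ_a(b) = φ_a(b°)`. -/
theorem stmt14 (S : SynapticAlgebra R) {a b c : R} (ha : a ∈ S.carrier)
    (hb : b ∈ S.carrier) (hc : c ∈ S.carrier) :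
    (S.le (S.sas a b) (S.sas a 1) ∧ S.sas a 1 = S.carr a) ∧
    (b ∈ S.Pos → S.le b c → S.le (S.sas a b) (S.sas a c)) ∧
    (b ∈ S.Pos → S.sas a b * c = 0 → S.sas a c * b = 0) ∧
    (b ∈ S.Pos → c ∈ S.Pos → (S.sas a b * c = 0 ↔ S.sas a c * b = 0)) ∧
    (b ∈ S.Pos → S.sas a b = S.sas a (S.carr b)) := by
  have haba : a * b * a ∈ S.carrier := S.quad_mem ha hb
  have haca : a * c * a ∈ S.carrier := S.quad_mem ha hc
  obtain ⟨hpm, hp2, hpiff⟩ := S.carr_spec haba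
  have hi2 : S.sas a 1 = S.carr a := by
    show S.carr (a * 1 * a) = S.carr a
    rw [mul_one, S.carr_sq ha]
  have hi1 : S.le (S.sas a b) (S.sas a 1) := by
    rw [hi2]
    obtain ⟨hqm, hq2, hqiff⟩ := S.carr_spec ha
    have h1qm : 1 - S.carr a ∈ S.carrier := S.sub_mem' S.one_mem hqm
    have ha1q : a * (1 - S.carr a) = 0 :=
      (hqiff _ h1qm).mpr (by rw [mul_sub, mul_one, hq2, sub_self])
    have h2 : (a * b * a) * (1 - S.carr a) = 0 := by rw [mul_assoc, ha1q, mul_zero]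
    have hp1q : S.carr (a * b * a) * (1 - S.carr a) = 0 := (hpiff _ h1qm).mp h2
    have hpq : S.carr (a * b * a) * S.carr a = S.carr (a * b * a) := by
      rw [mul_sub, mul_one, sub_eq_zero] at hp1q; exact hp1q.symm
    exact S.proj_le hpm hp2 hqm hq2 hpq (S.proj_mul_symm hpm hp2 hqm hpq)
  have part2 : b ∈ S.Pos → S.le b c → S.le (S.sas a b) (S.sas a c) := by
    intro hbp hbc
    have hbc' : c - b ∈ S.Pos := hbc
    have hcp : c ∈ S.Pos := by simpa using S.pos_add hbp hbc'
    obtain ⟨hqm, hq2, hqiff⟩ := S.carr_spec haca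
    have hfm : 1 - S.carr (a * c * a) ∈ S.carrier := S.sub_mem' S.one_mem hqm
    have hf2 : (1 - S.carr (a * c * a)) * (1 - S.carr (a * c * a)) =
        1 - S.carr (a * c * a) := one_sub_idem hq2
    have hfp : 1 - S.carr (a * c * a) ∈ S.Pos := S.idem_pos hfm hf2
    have hacaf : (a * c * a) * (1 - S.carr (a * c * a)) = 0 :=
      (hqiff _ hfm).mpr (by rw [mul_sub, mul_one, hq2, sub_self])
    set f := 1 - S.carr (a * c * a) with hf
    have hafam : a * f * a ∈ S.carrier := S.quad_mem ha hfm
    have h2 : (a * f * a) * c * (a * f * a) = 0 := by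
      have e : (a * f * a) * c * (a * f * a) = a * f * ((a * c * a) * f) * a := by
        noncomm_ring
      rw [e, hacaf, mul_zero, zero_mul]
    have h3 : (a * f * a) * c = 0 := (S.SA5 hafam hcp h2).1
    obtain ⟨hrm, hr2, hriff⟩ := S.carr_spec hafam
    have hrc : S.carr (a * f * a) * c = 0 := (hriff c hc).mp h3
    have hrcr : S.carr (a * f * a) * c * S.carr (a * f * a) = 0 := by rw [hrc, zero_mul]
    have hrp : S.carr (a * f * a) ∈ S.Pos := S.idem_pos hrm hr2
    have hrbr : S.carr (a * f * a) * b * S.carr (a * f * a) ∈ S.Pos := S.SA4 hrp hbp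
    have hrdr : S.carr (a * f * a) * (c - b) * S.carr (a * f * a) ∈ S.Pos :=
      S.SA4 hrp hbc'
    have hsum : S.carr (a * f * a) * b * S.carr (a * f * a) +
        S.carr (a * f * a) * (c - b) * S.carr (a * f * a) = 0 := by
      have e : S.carr (a * f * a) * b * S.carr (a * f * a) +
          S.carr (a * f * a) * (c - b) * S.carr (a * f * a) =
          S.carr (a * f * a) * c * S.carr (a * f * a) := by noncomm_ring
      rw [e, hrcr]
    have h4 : S.carr (a * f * a) * (c - b) * S.carr (a * f * a) =
        -(S.carr (a * f * a) * b * S.carr (a * f * a)) :=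
      eq_neg_of_add_eq_zero_right hsum
    have h5 : S.carr (a * f * a) * b * S.carr (a * f * a) = 0 :=
      S.pos_antisymm hrbr (by rw [← h4]; exact hrdr)
    have h6 : S.carr (a * f * a) * b = 0 := (S.SA5 hrm hbp h5).1
    have h7 : (a * f * a) * b = 0 := (hriff b hb).mpr h6
    have h8 : (a * b * a) * f * (a * b * a) = 0 := by
      have e : (a * b * a) * f * (a * b * a) = a * b * ((a * f * a) * b) * a := by
        noncomm_ring
      rw [e, h7, mul_zero, zero_mul]
    have h9 : (a * b * a) * f = 0 := (S.SA5 haba hfp h8).1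
    have h10 : S.carr (a * b * a) * f = 0 := (hpiff _ hfm).mp h9
    have hpq : S.carr (a * b * a) * S.carr (a * c * a) = S.carr (a * b * a) := by
      rw [hf, mul_sub, mul_one, sub_eq_zero] at h10; exact h10.symm
    exact S.proj_le hpm hp2 hqm hq2 hpq (S.proj_mul_symm hpm hp2 hqm hpq)
  have part5 : b ∈ S.Pos → S.sas a b = S.sas a (S.carr b) := by
    intro hbp
    obtain ⟨hem, he2, hbiff⟩ := S.carr_spec hb
    have hep : S.carr b ∈ S.Pos := S.idem_pos hem he2
    have haea : a * S.carr b * a ∈ S.carrier := S.quad_mem ha hem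
    obtain ⟨hqm, hq2, _⟩ := S.carr_spec haea
    have heb : ∀ r ∈ S.carrier, r * S.carr b = 0 → r * b = 0 := by
      intro r hrm h
      have h1 : S.carr b * r = 0 := S.mul_zero_symm hrm hep h
      have h2 : b * r = 0 := by rw [← S.mul_carr hb, mul_assoc, h1, mul_zero]
      exact S.zero_mul_symm hrm hbp h2
    have hbe : ∀ r ∈ S.carrier, r * b = 0 → r * S.carr b = 0 := by
      intro r hrm h
      have h1 : b * r = 0 := S.mul_zero_symm hrm hbp h
      exact S.zero_mul_symm hrm hep ((hbiff r hrm).mp h1)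
    have key1 : ∀ x ∈ S.carrier, x ∈ S.Pos →
        S.sas a (S.carr b) * x = 0 → S.sas a b * x = 0 := by
      intro x hxm hxp h
      have h1 : S.sas a x * S.carr b = 0 := S.sas_orth ha hem hxm hep h
      have h2 : S.sas a x * b = 0 :=
        heb _ (S.carr_spec (S.quad_mem ha hxm)).1 h1
      exact S.sas_orth ha hxm hb hxp h2
    have key2 : ∀ x ∈ S.carrier, x ∈ S.Pos →
        S.sas a b * x = 0 → S.sas a (S.carr b) * x = 0 := by
      intro x hxm hxp h
      have h1 : S.sas a x * b = 0 := S.sas_orth ha hb hxm hbp h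
      have h2 : S.sas a x * S.carr b = 0 :=
        hbe _ (S.carr_spec (S.quad_mem ha hxm)).1 h1
      exact S.sas_orth ha hxm hem hxp h2
    have hx1m : 1 - S.carr (a * S.carr b * a) ∈ S.carrier := S.sub_mem' S.one_mem hqm
    have hx1p : 1 - S.carr (a * S.carr b * a) ∈ S.Pos :=
      S.idem_pos hx1m (one_sub_idem hq2)
    have hx2m : 1 - S.carr (a * b * a) ∈ S.carrier := S.sub_mem' S.one_mem hpm
    have hx2p : 1 - S.carr (a * b * a) ∈ S.Pos := S.idem_pos hx2m (one_sub_idem hp2)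
    have hq1q : S.sas a (S.carr b) * (1 - S.carr (a * S.carr b * a)) = 0 := by
      show S.carr (a * S.carr b * a) * (1 - S.carr (a * S.carr b * a)) = 0
      rw [mul_sub, mul_one, hq2, sub_self]
    have hp1p : S.sas a b * (1 - S.carr (a * b * a)) = 0 := by
      show S.carr (a * b * a) * (1 - S.carr (a * b * a)) = 0
      rw [mul_sub, mul_one, hp2, sub_self]
    have hp1q : S.carr (a * b * a) * (1 - S.carr (a * S.carr b * a)) = 0 :=
      key1 _ hx1m hx1p hq1q
    have hq1p : S.carr (a * S.carr b * a) * (1 - S.carr (a * b * a)) = 0 :=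
      key2 _ hx2m hx2p hp1p
    have hpq : S.carr (a * b * a) * S.carr (a * S.carr b * a) = S.carr (a * b * a) := by
      rw [mul_sub, mul_one, sub_eq_zero] at hp1q; exact hp1q.symm
    have hqp : S.carr (a * S.carr b * a) * S.carr (a * b * a) =
        S.carr (a * S.carr b * a) := by
      rw [mul_sub, mul_one, sub_eq_zero] at hq1p; exact hq1p.symm
    have h := S.proj_mul_symm hpm hp2 hqm hpq
    exact (hqp.symm.trans h).symm
  exact ⟨⟨hi1, hi2⟩, part2, fun hbp h => S.sas_orth ha hb hc hbp h,
    fun hbp hcp => ⟨fun h => S.sas_orth ha hb hc hbp h, fun h => S.sas_orth ha hc hb hcp h⟩,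
    part5⟩
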